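/- arXiv:1704.06753 — 4 statements merged into one kernel-verified Lean document; each statement's English description precedes it below -/
import Mathlib

section
/- Covering is monotone under sup-convolution: for measurable f, g, h, φ : ℝⁿ → [0,∞), N(φ⋆f, φ⋆g, h) ≤ N(f, g, h), where (u⋆v)(x) = sup_z u(z)v(x−z). -/
open MeasureTheory ENNReal NNReal

noncomputable section

/-- The ambient space `ℝⁿ`. -/
abbrev Vn (n : ℕ) := EuclideanSpace ℝ (Fin n)

/-- Convolution of a (nonnegative Borel) measure with a `[0,∞]`-valued function:
`(μ * g)(x) = ∫ g(x - t) dμ(t)`. -/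
def mconv {n : ℕ} (μ : Measure (Vn n)) (g : Vn n → ℝ≥0∞) (x : Vn n) : ℝ≥0∞ :=
  ∫⁻ t, g (x - t) ∂μ

/-- `μ` is a covering measure of `f` by `g` : `μ * g ≥ f` pointwise. -/
def Covers {n : ℕ} (μ : Measure (Vn n)) (g f : Vn n → ℝ≥0∞) : Prop :=
  ∀ x, f x ≤ mconv μ g x

/-- `ρ` is a `g`-separated measure with respect to `h` : `ρ * g ≤ h` pointwise. -/
def Separated {n : ℕ} (ρ : Measure (Vn n)) (g h : Vn n → ℝ≥0∞) : Prop :=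
  ∀ x, mconv ρ g x ≤ h x

/-- The `h`-covering number of `f` by `g`:
`N(f,g,h) = inf {∫ h dμ : μ * g ≥ f}`. -/
def covN {n : ℕ} (f g h : Vn n → ℝ≥0∞) : ℝ≥0∞ :=
  ⨅ μ : {μ : Measure (Vn n) // Covers μ g f}, ∫⁻ x, h x ∂μ.1

/-- The `h`-separation number of `f` by `g`:
`M(f,g,h) = sup {∫ f dρ : ρ * g ≤ h}`. -/
def sepM {n : ℕ} (f g h : Vn n → ℝ≥0∞) : ℝ≥0∞ :=
  ⨆ ρ : {ρ : Measure (Vn n) // Separated ρ g h}, ∫⁻ x, f x ∂ρ.1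

/-- Sup-convolution: `(u ⋆ v)(x) = sup_z u(z) v(x - z)`. -/
def supconv {n : ℕ} (u v : Vn n → ℝ≥0∞) (x : Vn n) : ℝ≥0∞ :=
  ⨆ z, u z * v (x - z)


/-- Covering is monotone under sup-convolution: `N(φ⋆f, φ⋆g, h) ≤ N(f, g, h)`. -/
theorem covN_supconv_mono {n : ℕ} (f g h φ : Vn n → ℝ≥0)
    (hf : Measurable f) (hg : Measurable g) (hh : Measurable h) (hφ : Measurable φ) :
    covN (supconv (fun x => (φ x : ℝ≥0∞)) (fun x => (f x : ℝ≥0∞)))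
        (supconv (fun x => (φ x : ℝ≥0∞)) (fun x => (g x : ℝ≥0∞)))
        (fun x => (h x : ℝ≥0∞)) ≤
      covN (fun x => (f x : ℝ≥0∞)) (fun x => (g x : ℝ≥0∞)) (fun x => (h x : ℝ≥0∞)) := by
  apply le_iInf
  rintro ⟨μ, hμ⟩
  have hcov : Covers μ (supconv (fun x => (φ x : ℝ≥0∞)) (fun x => (g x : ℝ≥0∞)))
      (supconv (fun x => (φ x : ℝ≥0∞)) (fun x => (f x : ℝ≥0∞))) := by
    intro x
    calc supconv (fun x => (φ x : ℝ≥0∞)) (fun x => (f x : ℝ≥0∞)) x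
        ≤ ⨆ z, (φ z : ℝ≥0∞) * mconv μ (fun x => (g x : ℝ≥0∞)) (x - z) := by
          exact iSup_mono fun z => mul_le_mul_right (hμ (x - z)) _
      _ = ⨆ z, ∫⁻ t, (φ z : ℝ≥0∞) * (g (x - z - t) : ℝ≥0∞) ∂μ := by
          refine iSup_congr fun z => ?_
          rw [mconv, lintegral_const_mul' _ _ (by simp)]
      _ ≤ ∫⁻ t, ⨆ z, (φ z : ℝ≥0∞) * (g (x - z - t) : ℝ≥0∞) ∂μ := by
          exact iSup_le fun z => lintegral_mono fun t => le_iSup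
            (fun z => (φ z : ℝ≥0∞) * (g (x - z - t) : ℝ≥0∞)) z
      _ ≤ mconv μ (supconv (fun x => (φ x : ℝ≥0∞)) (fun x => (g x : ℝ≥0∞))) x := by
          refine lintegral_mono fun t => iSup_le fun z => ?_
          refine le_iSup_of_le z (le_of_eq ?_)
          congr 2
          abel
  exact iInf_le (fun μ' : {μ' : Measure (Vn n) // Covers μ'
    (supconv (fun x => (φ x : ℝ≥0∞)) (fun x => (g x : ℝ≥0∞)))
    (supconv (fun x => (φ x : ℝ≥0∞)) (fun x => (f x : ℝ≥0∞)))} =>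
    ∫⁻ x, (h x : ℝ≥0∞) ∂μ'.1) ⟨μ, hcov⟩
end
end

section
/- Upper bound for functional separation: for log-concave f, g ∈ LC_g(ℝⁿ) and every p > 1, M(f, g) ≤ (∫ (f⋆g^{p−1})(x) dx) / (∫ g^p(x) dx), where ⋆ is sup-convolution and M(f,g) is the separation number with weight h ≡ 1. -/
/-! If `ρ * g ≤ 1`, Tonelli and the translation invariance of Lebesgue measure give
`ρ(f) ∫ g^p = ∫∫ f(t) g^{p-1}(x - t) g(x - t) dρ(t) dx ≤ ∫ (f ⋆ g^{p-1})(x) (ρ * g)(x) dx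
≤ ∫ f ⋆ g^{p-1}`.
Tonelli needs `ρ` to be σ-finite. A superlevel set `{ε ≤ g}` of the log-concave `g` is convex, and
for small `ε > 0` it has positive measure, hence nonempty interior; so `g ≥ ε` near some point
and `ρ * g ≤ 1` makes `ρ` locally finite. -/

open MeasureTheory ENNReal NNReal

noncomputable section

/-- Geometric log-concave functions: upper semicontinuous, `0 ≤ f ≤ 1`,
`f(0) = max f = 1`, log-concave, with finite positive integral. -/
structure IsLCg {n : ℕ} (f : Vn n → ℝ) : Prop where
  usc : UpperSemicontinuous f
  nonneg : ∀ x, 0 ≤ f x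
  le_one : ∀ x, f x ≤ 1
  at_zero : f 0 = 1
  logconcave : ∀ x y : Vn n, ∀ t : ℝ, 0 ≤ t → t ≤ 1 →
    f x ^ t * f y ^ (1 - t) ≤ f (t • x + (1 - t) • y)
  int_pos : 0 < ∫⁻ x, ENNReal.ofReal (f x)
  int_fin : ∫⁻ x, ENNReal.ofReal (f x) < ∞

open Set Filter Topology

section SupConvolution

variable {E : Type*} [AddGroup E]

def supConv (f g : E → ℝ) (x : E) : ℝ≥0∞ :=
  ⨆ z, ENNReal.ofReal (f z * g (x - z))

lemma ofReal_mul_le_supConv (f g : E → ℝ) (x z : E) :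
    ENNReal.ofReal (f z * g (x - z)) ≤ supConv f g x :=
  le_iSup (fun z => ENNReal.ofReal (f z * g (x - z))) z

lemma ofReal_le_supConv {g : E → ℝ} (hg : g 0 = 1) (f : E → ℝ) (x : E) :
    ENNReal.ofReal (f x) ≤ supConv f g x := by
  simpa [hg] using ofReal_mul_le_supConv f g x x

lemma ofReal_mul_rpow_le_supConv_mul {f g : E → ℝ} (hg : ∀ y, 0 ≤ g y) {p : ℝ} (hp : p ≠ 0)
    (x t : E) :
    ENNReal.ofReal (f t) * ENNReal.ofReal (g (x - t) ^ p) ≤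
      supConv f (fun y => g y ^ (p - 1)) x * ENNReal.ofReal (g (x - t)) := by
  have hsplit : g (x - t) ^ p = g (x - t) ^ (p - 1) * g (x - t) := by
    simpa using Real.rpow_add_one' (hg (x - t)) (by simpa using hp : p - 1 + 1 ≠ 0)
  rw [← ENNReal.ofReal_mul' (Real.rpow_nonneg (hg _) _), hsplit, ← mul_assoc,
    ENNReal.ofReal_mul' (hg _)]
  gcongr
  exact ofReal_mul_le_supConv f _ x t

end SupConvolution

theorem lintegral_mul_lintegral_eq_lintegral_lintegral_sub {G : Type*} [MeasurableSpace G]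
    [AddGroup G] [MeasurableAdd G] [MeasurableSub₂ G] {ρ μ : Measure G} [SFinite ρ] [SFinite μ]
    [μ.IsAddRightInvariant] {φ ψ : G → ℝ≥0∞} (hφ : Measurable φ) (hψ : Measurable ψ) :
    (∫⁻ t, φ t ∂ρ) * ∫⁻ x, ψ x ∂μ = ∫⁻ x, ∫⁻ t, φ t * ψ (x - t) ∂ρ ∂μ := by
  calc (∫⁻ t, φ t ∂ρ) * ∫⁻ x, ψ x ∂μ
      = ∫⁻ t, ∫⁻ x, φ t * ψ (x - t) ∂μ ∂ρ := by
        rw [← lintegral_mul_const _ hφ]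
        refine lintegral_congr fun t => ?_
        rw [← lintegral_const_mul _ hψ, lintegral_sub_right_eq_self (fun x => φ t * ψ x) t]
    _ = ∫⁻ x, ∫⁻ t, φ t * ψ (x - t) ∂ρ ∂μ :=
        lintegral_lintegral_swap ((hφ.comp measurable_fst).mul
          (hψ.comp (measurable_snd.sub measurable_fst))).aemeasurable

theorem Convex.interior_nonempty_of_measure_pos {E : Type*} [NormedAddCommGroup E]
    [NormedSpace ℝ E] [MeasurableSpace E] [BorelSpace E] [FiniteDimensional ℝ E]
    {μ : Measure E} [μ.IsAddHaarMeasure] {s : Set E} (hs : Convex ℝ s) (h : 0 < μ s) :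
    (interior s).Nonempty := by
  by_contra! he
  have hsub : s ⊆ frontier s := by
    rw [frontier, he, sdiff_empty]
    exact subset_closure
  exact h.ne' (measure_mono_null hsub (hs.addHaar_frontier μ))

theorem exists_pos_measure_setOf_le_of_lintegral_pos {α : Type*} [MeasurableSpace α]
    {μ : Measure α} {g : α → ℝ} (h : 0 < ∫⁻ x, ENNReal.ofReal (g x) ∂μ) :
    ∃ ε : ℝ, 0 < ε ∧ 0 < μ {x | ε ≤ g x} := by
  by_contra! hnull
  have hg : ∀ᵐ x ∂μ, g x ≤ 0 := by
    refine ae_iff.2 (measure_mono_null (fun x hx => ?_)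
      (measure_iUnion_null fun k : ℕ => nonpos_iff_eq_zero.1 (hnull (1 / (k + 1)) (by positivity))))
    obtain ⟨k, hk⟩ := exists_nat_one_div_lt (not_le.1 hx)
    exact mem_iUnion.2 ⟨k, hk.le⟩
  refine h.ne' ((lintegral_congr_ae (hg.mono fun x hx => ?_)).trans lintegral_zero)
  exact ENNReal.ofReal_eq_zero.2 hx

namespace IsLCg

variable {n : ℕ} {g : Vn n → ℝ}

theorem convex_setOf_le (hg : IsLCg g) {ε : ℝ} (hε : 0 < ε) : Convex ℝ {x | ε ≤ g x} := by
  intro x hx y hy a b ha hb hab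
  obtain rfl : b = 1 - a := by linarith
  calc ε = ε ^ a * ε ^ (1 - a) := by rw [← Real.rpow_add hε]; simp
    _ ≤ g x ^ a * g y ^ (1 - a) :=
        mul_le_mul (Real.rpow_le_rpow hε.le hx ha) (Real.rpow_le_rpow hε.le hy (by linarith))
          (by positivity) (Real.rpow_nonneg (hg.nonneg x) a)
    _ ≤ g (a • x + (1 - a) • y) := hg.logconcave x y a ha (by linarith)

theorem exists_eventually_le (hg : IsLCg g) :
    ∃ ε : ℝ, 0 < ε ∧ ∃ x₀ : Vn n, ∀ᶠ y in 𝓝 x₀, ε ≤ g y := by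
  obtain ⟨ε, hε, hpos⟩ := exists_pos_measure_setOf_le_of_lintegral_pos hg.int_pos
  obtain ⟨x₀, hx₀⟩ := (hg.convex_setOf_le hε).interior_nonempty_of_measure_pos hpos
  exact ⟨ε, hε, x₀, mem_interior_iff_mem_nhds.1 hx₀⟩

theorem lintegral_rpow_lt_top (hg : IsLCg g) {p : ℝ} (hp : 1 ≤ p) :
    ∫⁻ x, ENNReal.ofReal (g x ^ p) < ∞ := by
  refine lt_of_le_of_lt (lintegral_mono fun x => ENNReal.ofReal_le_ofReal ?_) hg.int_fin
  simpa using Real.rpow_le_rpow_of_exponent_ge' (hg.nonneg x) (hg.le_one x) zero_le_one hp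

end IsLCg

namespace Separated

variable {n : ℕ} {ρ : Measure (Vn n)}

theorem isLocallyFiniteMeasure {g h : Vn n → ℝ≥0∞} (hρ : Separated ρ g h) (hh : ∀ x, h x ≠ ∞)
    (hg : Measurable g) {ε : ℝ≥0∞} (hε : ε ≠ 0) {x₀ : Vn n} (hx₀ : ∀ᶠ y in 𝓝 x₀, ε ≤ g y) :
    IsLocallyFiniteMeasure ρ := by
  refine ⟨fun x => ⟨{t | ε ≤ g (x + x₀ - t)}, ?_, ?_⟩⟩
  · exact ((continuous_sub_left (x + x₀)).tendsto' x x₀ (by abel)).eventually hx₀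
  · have hmarkov : ε * ρ {t | ε ≤ g (x + x₀ - t)} ≤ mconv ρ g (x + x₀) :=
      mul_meas_ge_le_lintegral₀ (by fun_prop) ε
    exact ENNReal.lt_top_of_mul_ne_top_right
      (ne_top_of_le_ne_top (hh (x + x₀)) (hmarkov.trans (hρ (x + x₀)))) hε

theorem lintegral_mul_lintegral_rpow_le [SFinite ρ] {f g : Vn n → ℝ} {h : Vn n → ℝ≥0∞}
    (hρ : Separated ρ (fun x => ENNReal.ofReal (g x)) h) (hf : Measurable f)
    (hg : Measurable g) (hg0 : ∀ x, 0 ≤ g x) {p : ℝ} (hp : p ≠ 0) :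
    (∫⁻ t, ENNReal.ofReal (f t) ∂ρ) * ∫⁻ x, ENNReal.ofReal (g x ^ p) ≤
      ∫⁻ x, supConv f (fun y => g y ^ (p - 1)) x * h x := by
  calc (∫⁻ t, ENNReal.ofReal (f t) ∂ρ) * ∫⁻ x, ENNReal.ofReal (g x ^ p)
      = ∫⁻ x, ∫⁻ t, ENNReal.ofReal (f t) * ENNReal.ofReal (g (x - t) ^ p) ∂ρ :=
        lintegral_mul_lintegral_eq_lintegral_lintegral_sub hf.ennreal_ofReal
          (hg.pow_const p).ennreal_ofReal
    _ ≤ ∫⁻ x, ∫⁻ t, supConv f (fun y => g y ^ (p - 1)) x * ENNReal.ofReal (g (x - t)) ∂ρ :=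
        lintegral_mono fun x => lintegral_mono fun t => ofReal_mul_rpow_le_supConv_mul hg0 hp x t
    _ = ∫⁻ x, supConv f (fun y => g y ^ (p - 1)) x * mconv ρ (fun y => ENNReal.ofReal (g y)) x :=
        lintegral_congr fun x =>
          lintegral_const_mul _ (hg.comp (measurable_const.sub measurable_id)).ennreal_ofReal
    _ ≤ ∫⁻ x, supConv f (fun y => g y ^ (p - 1)) x * h x := by
        gcongr with x
        exact hρ x

end Separated

/-- Upper bound for separation: for `f, g ∈ LC_g(ℝⁿ)` and `p > 1`,
`M(f, g) ≤ (∫ (f ⋆ g^{p-1})) / (∫ g^p)`, where `⋆` is sup-convolution. -/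
theorem sepM_upper_bound {n : ℕ} (f g : Vn n → ℝ) (hf : IsLCg f) (hg : IsLCg g)
    (p : ℝ) (hp : 1 < p) :
    sepM (fun x => ENNReal.ofReal (f x)) (fun x => ENNReal.ofReal (g x)) (fun _ => 1) ≤
      (∫⁻ x, ⨆ z, ENNReal.ofReal (f z * g (x - z) ^ (p - 1))) /
        ∫⁻ x, ENNReal.ofReal (g x ^ p) := by
  have hsupConv_ne_zero : ∫⁻ x, supConv f (fun y => g y ^ (p - 1)) x ≠ 0 := by
    refine (hf.int_pos.trans_le (lintegral_mono fun x => ofReal_le_supConv ?_ f x)).ne'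
    simp [hg.at_zero]
  obtain ⟨ε, hε, x₀, hx₀⟩ := hg.exists_eventually_le
  refine iSup_le fun ⟨ρ, hρ⟩ => ?_
  have : IsLocallyFiniteMeasure ρ :=
    hρ.isLocallyFiniteMeasure (fun _ => one_ne_top) hg.usc.measurable.ennreal_ofReal
      (ENNReal.ofReal_pos.2 hε).ne' (hx₀.mono fun y hy => ENNReal.ofReal_le_ofReal hy)
  change ∫⁻ t, ENNReal.ofReal (f t) ∂ρ ≤ (∫⁻ x, supConv f (fun y => g y ^ (p - 1)) x) / _
  rw [ENNReal.le_div_iff_mul_le (Or.inr hsupConv_ne_zero)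
    (Or.inl (hg.lintegral_rpow_lt_top hp.le).ne)]
  simpa only [mul_one] using hρ.lintegral_mul_lintegral_rpow_le hf.usc.measurable
    hg.usc.measurable hg.nonneg (zero_lt_one.trans hp).ne'
end
end

section
/- Upper volume bound for covering via L² norms: for f, g ∈ LC_g(ℝⁿ), N(f, g) ≤ 2ⁿ · (∫ f²(x) dx) / ‖f*g‖_∞, where (f*g)(x) = ∫ f(y)g(x−y) dy. In particular, the measure with Lebesgue density x ↦ f²((x+x₀)/2)/‖f*g‖_∞, where ‖f*g‖_∞ = (f*g)(x₀), is a covering measure of f by g. -/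
open MeasureTheory ENNReal NNReal

noncomputable section

/-- Convolution of two functions, as a `[0,∞]`-valued function. -/
def fconv {n : ℕ} (f g : Vn n → ℝ) (x : Vn n) : ℝ≥0∞ :=
  ∫⁻ y, ENNReal.ofReal (f y) * ENNReal.ofReal (g (x - y))


/-! Midpoint log-concavity gives `f x · f (x₀ - y) ≤ f² ((x - y + x₀)/2)`. Integrating against
`g y` turns the left side into `f x · (f * g)(x₀)` and the right side into `(μ * g)(x)`, where `μ`
has density `f² ((· + x₀)/2)`; so `μ / (f * g)(x₀)` covers `f`, and its mass is `2ⁿ ∫ f²` by the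
change of variables `x ↦ (x + x₀)/2`. The division is legitimate because `(f * g)(x₀)` is finite
and, being the maximum of a function with integral `∫ f · ∫ g > 0`, positive. -/

section HaarScaling

variable {E : Type*} [NormedAddCommGroup E] [NormedSpace ℝ E] [MeasurableSpace E] [BorelSpace E]
  [FiniteDimensional ℝ E] (μ : Measure E) [μ.IsAddHaarMeasure]

theorem lintegral_comp_smul {H : E → ℝ≥0∞} (hH : Measurable H) {r : ℝ} (hr : r ≠ 0) :
    ∫⁻ x, H (r • x) ∂μ = ENNReal.ofReal |(r ^ Module.finrank ℝ E)⁻¹| * ∫⁻ x, H x ∂μ := by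
  rw [← lintegral_map hH (measurable_const_smul r), Measure.map_addHaar_smul μ hr,
    lintegral_smul_measure, smul_eq_mul]

theorem lintegral_comp_half_add {H : E → ℝ≥0∞} (hH : Measurable H) (c : E) :
    ∫⁻ x, H ((2:ℝ)⁻¹ • (x + c)) ∂μ = 2 ^ Module.finrank ℝ E * ∫⁻ x, H x ∂μ := by
  rw [lintegral_add_right_eq_self (fun x => H ((2:ℝ)⁻¹ • x)) c,
    lintegral_comp_smul μ hH (by norm_num), inv_pow, inv_inv, abs_of_nonneg (by positivity),
    ENNReal.ofReal_pow zero_le_two, ENNReal.ofReal_ofNat]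

end HaarScaling

theorem IsLCg.mul_le_sq_midpoint {n : ℕ} {f : Vn n → ℝ} (hf : IsLCg f) (a b : Vn n) :
    f a * f b ≤ f ((2:ℝ)⁻¹ • (a + b)) ^ 2 := by
  have hroot (x : Vn n) : (f x ^ (2:ℝ)⁻¹) ^ 2 = f x := by
    rw [← Real.rpow_natCast, ← Real.rpow_mul (hf.nonneg x)]
    norm_num
  have hmid := hf.logconcave a b 2⁻¹ (by norm_num) (by norm_num)
  rw [show (1 : ℝ) - 2⁻¹ = 2⁻¹ by norm_num, ← smul_add] at hmid
  calc f a * f b = (f a ^ (2:ℝ)⁻¹ * f b ^ (2:ℝ)⁻¹) ^ 2 := by rw [mul_pow, hroot, hroot]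
    _ ≤ _ := pow_le_pow_left₀ (by have := hf.nonneg a; have := hf.nonneg b; positivity) hmid 2

section Convolution

variable {n : ℕ} {f g : Vn n → ℝ}

theorem fconv_eq_lintegral_add_right (x₀ x : Vn n) :
    fconv f g x₀ = ∫⁻ t, ENNReal.ofReal (f (t + (x₀ - x))) * ENNReal.ofReal (g (x - t)) := by
  rw [fconv, ← lintegral_add_right_eq_self _ (x₀ - x)]
  refine lintegral_congr fun t => ?_
  rw [show x₀ - (t + (x₀ - x)) = x - t by abel]

theorem fconv_lt_top (hf : ∫⁻ x, ENNReal.ofReal (f x) < ∞) (hg : ∀ x, g x ≤ 1) (x : Vn n) :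
    fconv f g x < ∞ := by
  refine lt_of_le_of_lt (lintegral_mono fun y => ?_) hf
  exact mul_le_of_le_one_right' (ENNReal.ofReal_le_one.mpr (hg _))

theorem lintegral_fconv (hf : Measurable f) (hg : Measurable g) :
    ∫⁻ x, fconv f g x = (∫⁻ x, ENNReal.ofReal (f x)) * ∫⁻ x, ENNReal.ofReal (g x) := by
  have hinner (y : Vn n) : ∫⁻ x, ENNReal.ofReal (f y) * ENNReal.ofReal (g (x - y)) =
      ENNReal.ofReal (f y) * ∫⁻ x, ENNReal.ofReal (g x) := by
    rw [lintegral_const_mul' _ _ ENNReal.ofReal_ne_top,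
      lintegral_sub_right_eq_self (fun x => ENNReal.ofReal (g x)) y]
  unfold fconv
  rw [lintegral_lintegral_swap (by fun_prop)]
  simp_rw [hinner]
  exact lintegral_mul_const _ (by fun_prop)

theorem fconv_pos_of_forall_le (hf : Measurable f) (hg : Measurable g)
    (hf₀ : ∫⁻ x, ENNReal.ofReal (f x) ≠ 0) (hg₀ : ∫⁻ x, ENNReal.ofReal (g x) ≠ 0) {x₀ : Vn n}
    (hx₀ : ∀ x, fconv f g x ≤ fconv f g x₀) : 0 < fconv f g x₀ := by
  have hint : ∫⁻ x, fconv f g x ≠ 0 := by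
    rw [lintegral_fconv hf hg]
    exact mul_ne_zero hf₀ hg₀
  obtain ⟨x, hx⟩ : ∃ x, fconv f g x ≠ 0 := by
    by_contra! h
    simp [h] at hint
  exact (pos_iff_ne_zero.2 hx).trans_le (hx₀ x)

theorem IsLCg.mul_fconv_le (hf : IsLCg f) (x₀ x : Vn n) :
    ENNReal.ofReal (f x) * fconv f g x₀ ≤
      ∫⁻ t, ENNReal.ofReal (f ((2:ℝ)⁻¹ • (t + x₀)) ^ 2) * ENNReal.ofReal (g (x - t)) := by
  rw [fconv_eq_lintegral_add_right x₀ x, ← lintegral_const_mul' _ _ ENNReal.ofReal_ne_top]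
  refine lintegral_mono fun t => ?_
  rw [← mul_assoc, ← ENNReal.ofReal_mul (hf.nonneg x)]
  gcongr
  simpa [show x + (t + (x₀ - x)) = t + x₀ by abel] using hf.mul_le_sq_midpoint x (t + (x₀ - x))

theorem covers_withDensity_div (hf : IsLCg f) (hg : Measurable g)
    (x₀ : Vn n) (h0 : fconv f g x₀ ≠ 0) (htop : fconv f g x₀ ≠ ∞) :
    Covers (volume.withDensity
        (fun x => ENNReal.ofReal (f ((2:ℝ)⁻¹ • (x + x₀)) ^ 2) / fconv f g x₀))
      (fun x => ENNReal.ofReal (g x)) (fun x => ENNReal.ofReal (f x)) := by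
  have hfm := hf.usc.measurable
  intro x
  rw [mconv, lintegral_withDensity_eq_lintegral_mul _ (by fun_prop) (by fun_prop)]
  simp only [Pi.mul_apply, div_eq_mul_inv, mul_right_comm _ (fconv f g x₀)⁻¹]
  rw [lintegral_mul_const' _ _ (ENNReal.inv_ne_top.2 h0), ← div_eq_mul_inv,
    ENNReal.le_div_iff_mul_le (.inl h0) (.inl htop)]
  exact hf.mul_fconv_le x₀ x

end Convolution

theorem covN_le_measure_univ {n : ℕ} {μ : Measure (Vn n)} {f g : Vn n → ℝ≥0∞}
    (hμ : Covers μ g f) : covN f g (fun _ => 1) ≤ μ Set.univ :=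
  (iInf_le (fun ν : {ν // Covers ν g f} => ∫⁻ _, (1 : ℝ≥0∞) ∂ν.1) ⟨μ, hμ⟩).trans_eq
    lintegral_one

/-- Upper volume bound via L² norms: for `f, g ∈ LC_g(ℝⁿ)`, if `x₀` attains the
supremum of `f * g`, then the measure with density `x ↦ f²((x+x₀)/2)/‖f*g‖_∞`
covers `f` by `g`, and `N(f, g) ≤ 2ⁿ (∫ f²) / ‖f*g‖_∞`. -/
theorem covN_upper_L2_bound {n : ℕ} (f g : Vn n → ℝ) (hf : IsLCg f) (hg : IsLCg g)
    (x₀ : Vn n) (hx₀ : ∀ x, fconv f g x ≤ fconv f g x₀) :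
    Covers (volume.withDensity
        (fun x => ENNReal.ofReal (f ((2:ℝ)⁻¹ • (x + x₀)) ^ 2) / fconv f g x₀))
        (fun x => ENNReal.ofReal (g x)) (fun x => ENNReal.ofReal (f x)) ∧
      covN (fun x => ENNReal.ofReal (f x)) (fun x => ENNReal.ofReal (g x)) (fun _ => 1) ≤
        2 ^ n * (∫⁻ x, ENNReal.ofReal (f x ^ 2)) / fconv f g x₀ := by
  have hC0 := (fconv_pos_of_forall_le hf.usc.measurable hg.usc.measurable hf.int_pos.ne'
    hg.int_pos.ne' hx₀).ne'
  have hcov := covers_withDensity_div hf hg.usc.measurable x₀ hC0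
    (fconv_lt_top hf.int_fin hg.le_one x₀).ne
  refine ⟨hcov, (covN_le_measure_univ hcov).trans_eq ?_⟩
  simp_rw [withDensity_apply _ .univ, setLIntegral_univ, div_eq_mul_inv]
  rw [lintegral_mul_const' _ _ (ENNReal.inv_ne_top.2 hC0),
    lintegral_comp_half_add volume (hf.usc.measurable.pow_const 2).ennreal_ofReal,
    finrank_euclideanSpace_fin]
end
end

section
/- Comparison of a geometric log-concave function with its level-set body: let f = e^{−φ} ∈ LC_g(ℝⁿ) and K_f = {x : f(x) > e^{−n}}. Then C^{−n} ∫ f ≤ Vol(K_f) ≤ C^{n} ∫ f for a universal constant C > 1. In particular ∫_0^∞ e^{−t} Vol{φ ≤ t} dt = ∫ f, and Vol{φ ≤ t} ≤ (t/n)ⁿ Vol(K_f) for t ≥ n. -/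
open MeasureTheory ENNReal NNReal

noncomputable section

/-! Write `f = e^{-φ}`. Log-concavity and `φ 0 = 0` give `φ (s • x) ≤ s φ x` for `s ∈ [0, 1]`,
so `{φ ≤ t} ⊆ c • {φ < n}` for every `c > t / n`, and letting `c ↓ t / n` yields
`Vol {φ ≤ t} ≤ (t / n)ⁿ Vol K_f` for `t ≥ n`. The substitution `s = e^{-t}` in the layer-cake
formula `∫ f = ∫₀¹ Vol {s ≤ f} ds` gives `∫ f = ∫₀^∞ e^{-t} Vol {φ ≤ t} dt`; as
`e^{-t} (t / n)ⁿ ≤ e^{-t/2}`, this is at most `2 Vol K_f`. Markov's inequality gives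
`e^{-n} Vol K_f ≤ ∫ f`, so `C = e` works. -/

open Set Filter Topology Pointwise Module Real

theorem image_exp_neg_Ioi_zero : (fun t : ℝ => exp (-t)) '' Ioi 0 = Ioo 0 1 := by
  ext s
  constructor
  · rintro ⟨t, ht, rfl⟩
    exact ⟨exp_pos _, exp_lt_one_iff.2 (neg_neg_of_pos ht)⟩
  · rintro ⟨hs0, hs1⟩
    exact ⟨-log s, neg_pos.2 (log_neg hs0 hs1), by simp only [neg_neg, exp_log hs0]⟩

theorem setLIntegral_Ioo_zero_one_eq_exp_neg (g : ℝ → ℝ≥0∞) :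
    ∫⁻ s in Ioo 0 1, g s = ∫⁻ t in Ioi 0, ENNReal.ofReal (exp (-t)) * g (exp (-t)) := by
  have hderiv : ∀ t ∈ Ioi (0 : ℝ), HasDerivWithinAt (fun t => exp (-t)) (-exp (-t)) (Ioi 0) t :=
    fun t _ => by simpa using ((hasDerivAt_neg t).exp).hasDerivWithinAt
  have hinj : InjOn (fun t : ℝ => exp (-t)) (Ioi 0) :=
    fun a _ b _ h => neg_injective (exp_injective h)
  rw [← image_exp_neg_Ioi_zero,
    lintegral_image_eq_lintegral_abs_deriv_mul measurableSet_Ioi hderiv hinj]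
  simp only [abs_neg, abs_of_pos (exp_pos _)]

theorem lintegral_ofReal_eq_lintegral_exp_neg_mul_meas_le {α : Type*} [MeasurableSpace α]
    (μ : Measure α) {f : α → ℝ} (hf_nonneg : 0 ≤ᵐ[μ] f) (hf_le_one : ∀ x, f x ≤ 1)
    (hf : AEMeasurable f μ) :
    ∫⁻ x, ENNReal.ofReal (f x) ∂μ =
      ∫⁻ t in Ioi 0, ENNReal.ofReal (exp (-t)) * μ {x | exp (-t) ≤ f x} := by
  have hvanish : ∫⁻ s in Ioi 1, μ {x | s ≤ f x} = 0 := by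
    refine (setLIntegral_congr_fun measurableSet_Ioi fun s hs => ?_).trans lintegral_zero
    simp only [measure_eq_zero_iff_ae_notMem, mem_ofPred_eq, not_le]
    exact ae_of_all _ fun x => (hf_le_one x).trans_lt hs
  rw [lintegral_eq_lintegral_meas_le μ hf_nonneg hf,
    ← setLIntegral_Ioo_zero_one_eq_exp_neg fun s => μ {x | s ≤ f x},
    ← Ioc_union_Ioi_eq_Ioi zero_le_one, lintegral_union measurableSet_Ioi Ioc_disjoint_Ioi_same,
    hvanish, add_zero, setLIntegral_congr Ioo_ae_eq_Ioc]

theorem meas_lt_le_ofReal_inv_mul_lintegral {α : Type*} [MeasurableSpace α] (μ : Measure α)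
    {f : α → ℝ} (hf : AEMeasurable f μ) {c : ℝ} (hc : 0 < c) :
    μ {x | c < f x} ≤ ENNReal.ofReal c⁻¹ * ∫⁻ x, ENNReal.ofReal (f x) ∂μ := by
  calc μ {x | c < f x} ≤ μ {x | ENNReal.ofReal c ≤ ENNReal.ofReal (f x)} :=
        measure_mono fun x hx => ENNReal.ofReal_le_ofReal (le_of_lt hx)
    _ ≤ (∫⁻ x, ENNReal.ofReal (f x) ∂μ) / ENNReal.ofReal c :=
        meas_ge_le_lintegral_div hf.ennreal_ofReal (by simpa using hc) ENNReal.ofReal_ne_top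
    _ = ENNReal.ofReal c⁻¹ * ∫⁻ x, ENNReal.ofReal (f x) ∂μ := by
        rw [ENNReal.ofReal_inv_of_pos hc, div_eq_mul_inv, mul_comm]

theorem self_le_exp_half (u : ℝ) : u ≤ exp (u / 2) := by
  rcases le_or_gt u 0 with hu | hu
  · exact hu.trans (exp_pos _).le
  · nlinarith [quadratic_le_exp_of_nonneg (half_pos hu).le]

theorem exp_neg_mul_div_pow_le (n : ℕ) {t : ℝ} (ht : 0 ≤ t) :
    exp (-t) * (t / n) ^ n ≤ exp (-(t / 2)) := by
  have hnt : n * (t / n) ≤ t := by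
    rcases eq_or_ne n 0 with rfl | hn
    · simpa using ht
    · rw [mul_div_cancel₀ _ (Nat.cast_ne_zero.2 hn)]
  calc exp (-t) * (t / n) ^ n ≤ exp (-t) * exp (t / n / 2) ^ n := by
        gcongr
        exact self_le_exp_half _
    _ = exp (-t + n * (t / n) / 2) := by rw [← exp_nat_mul, ← exp_add, mul_div_assoc]
    _ ≤ exp (-(t / 2)) := exp_le_exp.2 (by linarith)

theorem lintegral_exp_neg_half_Ioi_zero :
    ∫⁻ t in Ioi (0 : ℝ), ENNReal.ofReal (exp (-(t / 2))) = 2 := by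
  have hform : (fun t : ℝ => ENNReal.ofReal (exp (-(t / 2)))) =
      fun t => ENNReal.ofReal (exp (-(1 / 2) * t)) := by
    ext t; ring_nf
  rw [hform, ← ofReal_integral_eq_lintegral_ofReal (integrableOn_exp_mul_Ioi (by norm_num) 0)
    (ae_of_all _ fun _ => (exp_pos _).le), integral_exp_mul_Ioi (by norm_num)]
  norm_num

section LogConcave

variable {E : Type*} [AddCommGroup E] [Module ℝ E]

def IsLogConcave (f : E → ℝ) : Prop :=
  ∀ x y : E, ∀ t : ℝ, 0 ≤ t → t ≤ 1 → f x ^ t * f y ^ (1 - t) ≤ f (t • x + (1 - t) • y)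

variable {f : E → ℝ}

theorem IsLogConcave.rpow_le_apply_smul (hf : IsLogConcave f) (hf_zero : f 0 = 1) {s : ℝ}
    (hs₀ : 0 ≤ s) (hs₁ : s ≤ 1) (x : E) : f x ^ s ≤ f (s • x) := by
  simpa [hf_zero] using hf x 0 s hs₀ hs₁

theorem IsLogConcave.setOf_exp_neg_le_subset_smul (hf : IsLogConcave f) (hf_zero : f 0 = 1)
    {m t c : ℝ} (hm : 0 < m) (hmt : m ≤ t) (hc : t / m < c) :
    {x | exp (-t) ≤ f x} ⊆ c • {x | exp (-m) < f x} := by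
  have hc₁ : 1 < c := ((one_le_div hm).2 hmt).trans_lt hc
  have hc₀ : 0 < c := one_pos.trans hc₁
  intro x hx
  rw [mem_smul_set_iff_inv_smul_mem₀ hc₀.ne']
  have hexp : -m < -(t * c⁻¹) := by
    rw [neg_lt_neg_iff, mul_inv_lt_iff₀ hc₀]
    rwa [div_lt_iff₀' hm] at hc
  calc exp (-m) < exp (-(t * c⁻¹)) := exp_lt_exp.2 hexp
    _ = exp (-t) ^ c⁻¹ := by rw [← exp_mul, neg_mul]
    _ ≤ f x ^ c⁻¹ := rpow_le_rpow (exp_pos _).le hx (inv_nonneg.2 hc₀.le)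
    _ ≤ f (c⁻¹ • x) :=
        hf.rpow_le_apply_smul hf_zero (inv_nonneg.2 hc₀.le) (inv_le_one_of_one_le₀ hc₁.le) x

end LogConcave

section AddHaar

variable {E : Type*} [NormedAddCommGroup E] [NormedSpace ℝ E] [MeasurableSpace E] [BorelSpace E]
  [FiniteDimensional ℝ E] (μ : Measure E) [μ.IsAddHaarMeasure] {f : E → ℝ}

theorem addHaar_le_of_forall_lt_subset_smul {A B : Set E} {r : ℝ} (hr : 0 < r)
    (h : ∀ c, r < c → A ⊆ c • B) : μ A ≤ ENNReal.ofReal (r ^ finrank ℝ E) * μ B := by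
  have hcont : Tendsto (fun c : ℝ => ENNReal.ofReal (c ^ finrank ℝ E) * μ B) (𝓝[>] r)
      (𝓝 (ENNReal.ofReal (r ^ finrank ℝ E) * μ B)) := by
    refine ENNReal.Tendsto.mul_const ?_ (Or.inl (by positivity))
    exact (ENNReal.continuous_ofReal.comp (continuous_pow _)).continuousWithinAt
  refine ge_of_tendsto hcont (eventually_nhdsWithin_of_forall fun c (hc : r < c) => ?_)
  calc μ A ≤ μ (c • B) := measure_mono (h c hc)
    _ = ENNReal.ofReal (c ^ finrank ℝ E) * μ B :=
        Measure.addHaar_smul_of_nonneg μ (hr.trans hc).le B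

theorem IsLogConcave.addHaar_setOf_exp_neg_le_le (hf : IsLogConcave f) (hf_zero : f 0 = 1)
    {m t : ℝ} (hm : 0 < m) (hmt : m ≤ t) :
    μ {x | exp (-t) ≤ f x} ≤
      ENNReal.ofReal ((t / m) ^ finrank ℝ E) * μ {x | exp (-m) < f x} :=
  addHaar_le_of_forall_lt_subset_smul μ (div_pos (hm.trans_le hmt) hm) fun _ hc =>
    hf.setOf_exp_neg_le_subset_smul hf_zero hm hmt hc

theorem IsLogConcave.exp_neg_mul_addHaar_le (hf : IsLogConcave f) (hf_zero : f 0 = 1)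
    (hE : 0 < finrank ℝ E) {t : ℝ} (ht : 0 ≤ t) :
    ENNReal.ofReal (exp (-t)) * μ {x | exp (-t) ≤ f x} ≤
      ENNReal.ofReal (exp (-(t / 2))) * μ {x | exp (-(finrank ℝ E : ℝ)) < f x} := by
  set d := finrank ℝ E
  rcases lt_or_ge t d with htd | hdt
  · exact mul_le_mul' (ENNReal.ofReal_le_ofReal (exp_le_exp.2 (by linarith)))
      (measure_mono fun x hx => (exp_lt_exp.2 (neg_lt_neg htd)).trans_le hx)
  · calc ENNReal.ofReal (exp (-t)) * μ {x | exp (-t) ≤ f x}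
        ≤ ENNReal.ofReal (exp (-t)) * (ENNReal.ofReal ((t / d) ^ d) * μ {x | exp (-d) < f x}) :=
          mul_le_mul_right (hf.addHaar_setOf_exp_neg_le_le μ hf_zero (Nat.cast_pos.2 hE) hdt) _
      _ = ENNReal.ofReal (exp (-t) * (t / d) ^ d) * μ {x | exp (-d) < f x} := by
          rw [← mul_assoc, ← ENNReal.ofReal_mul (exp_pos _).le]
      _ ≤ ENNReal.ofReal (exp (-(t / 2))) * μ {x | exp (-d) < f x} := by
          gcongr
          exact exp_neg_mul_div_pow_le d ht

theorem IsLogConcave.lintegral_le_two_mul_addHaar (hf : IsLogConcave f) (hf_zero : f 0 = 1)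
    (hf_nonneg : ∀ x, 0 ≤ f x) (hf_le_one : ∀ x, f x ≤ 1) (hf_meas : Measurable f)
    (hE : 0 < finrank ℝ E) :
    ∫⁻ x, ENNReal.ofReal (f x) ∂μ ≤ 2 * μ {x | exp (-(finrank ℝ E : ℝ)) < f x} := by
  have hmeas : Measurable fun t : ℝ => ENNReal.ofReal (exp (-(t / 2))) := by fun_prop
  calc ∫⁻ x, ENNReal.ofReal (f x) ∂μ
      = ∫⁻ t in Ioi 0, ENNReal.ofReal (exp (-t)) * μ {x | exp (-t) ≤ f x} :=
        lintegral_ofReal_eq_lintegral_exp_neg_mul_meas_le μ (ae_of_all _ hf_nonneg) hf_le_one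
          hf_meas.aemeasurable
    _ ≤ ∫⁻ t in Ioi 0, ENNReal.ofReal (exp (-(t / 2))) *
          μ {x | exp (-(finrank ℝ E : ℝ)) < f x} :=
        setLIntegral_mono (hmeas.mul_const _) fun t ht =>
          hf.exp_neg_mul_addHaar_le μ hf_zero hE (le_of_lt ht)
    _ = 2 * μ {x | exp (-(finrank ℝ E : ℝ)) < f x} := by
        rw [lintegral_mul_const _ hmeas, lintegral_exp_neg_half_Ioi_zero]

end AddHaar

/-- Comparison of a geometric log-concave function `f = e^{-φ}` with its level-set
body `K_f = {f > e^{-n}}`: there is a universal constant `C > 1` with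
`C⁻ⁿ ∫ f ≤ Vol(K_f) ≤ Cⁿ ∫ f`; moreover the layer-cake identity
`∫_0^∞ e^{-t} Vol{φ ≤ t} dt = ∫ f` holds, and `Vol{φ ≤ t} ≤ (t/n)ⁿ Vol(K_f)` for `t ≥ n`. -/
theorem level_set_volume_comparison :
    ∃ C : ℝ, 1 < C ∧ ∀ (n : ℕ), 1 ≤ n → ∀ f : Vn n → ℝ,
      UpperSemicontinuous f → (∀ x, 0 ≤ f x) → (∀ x, f x ≤ 1) → f 0 = 1 →
      (∀ x y : Vn n, ∀ t : ℝ, 0 ≤ t → t ≤ 1 →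
        f x ^ t * f y ^ (1 - t) ≤ f (t • x + (1 - t) • y)) →
      0 < ∫⁻ x, ENNReal.ofReal (f x) → (∫⁻ x, ENNReal.ofReal (f x)) < ∞ →
      (ENNReal.ofReal (C⁻¹ ^ n) * ∫⁻ x, ENNReal.ofReal (f x) ≤
          volume {x : Vn n | Real.exp (-(n : ℝ)) < f x} ∧
        volume {x : Vn n | Real.exp (-(n : ℝ)) < f x} ≤
          ENNReal.ofReal (C ^ n) * ∫⁻ x, ENNReal.ofReal (f x)) ∧
      (∫⁻ t in Set.Ioi (0 : ℝ),
          ENNReal.ofReal (Real.exp (-t)) * volume {x : Vn n | Real.exp (-t) ≤ f x} =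
        ∫⁻ x, ENNReal.ofReal (f x)) ∧
      (∀ t : ℝ, (n : ℝ) ≤ t →
        volume {x : Vn n | Real.exp (-t) ≤ f x} ≤
          ENNReal.ofReal ((t / n) ^ n) * volume {x : Vn n | Real.exp (-(n : ℝ)) < f x}) := by
  refine ⟨exp 1, one_lt_exp_iff.2 one_pos,
    fun n hn f hf_usc hf_nonneg hf_le_one hf_zero hf _ _ => ?_⟩
  have hdim : finrank ℝ (Vn n) = n := finrank_euclideanSpace_fin
  have hlevel (t : ℝ) (ht : (n : ℝ) ≤ t) := hdim ▸
    IsLogConcave.addHaar_setOf_exp_neg_le_le volume hf hf_zero (Nat.cast_pos.2 hn) ht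
  have hupper := meas_lt_le_ofReal_inv_mul_lintegral volume hf_usc.measurable.aemeasurable
    (exp_pos (-(n : ℝ)))
  have hlower := hdim ▸ IsLogConcave.lintegral_le_two_mul_addHaar volume hf hf_zero hf_nonneg
    hf_le_one hf_usc.measurable (hdim.symm ▸ hn)
  have hC : (exp 1)⁻¹ ^ n ≤ 2⁻¹ :=
    calc (exp 1)⁻¹ ^ n ≤ (exp 1)⁻¹ :=
          pow_le_of_le_one (by positivity) (inv_le_one_of_one_le₀ (one_le_exp zero_le_one))
            (by omega)
      _ ≤ 2⁻¹ := inv_anti₀ two_pos (by linarith [add_one_le_exp 1])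
  refine ⟨⟨?_, ?_⟩, (lintegral_ofReal_eq_lintegral_exp_neg_mul_meas_le volume
    (ae_of_all _ hf_nonneg) hf_le_one hf_usc.measurable.aemeasurable).symm, hlevel⟩
  · calc ENNReal.ofReal ((exp 1)⁻¹ ^ n) * ∫⁻ x, ENNReal.ofReal (f x)
        ≤ ENNReal.ofReal 2⁻¹ * (2 * volume {x : Vn n | exp (-(n : ℝ)) < f x}) :=
          mul_le_mul' (ENNReal.ofReal_le_ofReal hC) hlower
      _ = volume {x : Vn n | exp (-(n : ℝ)) < f x} := by
          rw [← mul_assoc, ENNReal.ofReal_inv_of_pos two_pos, ENNReal.ofReal_ofNat,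
            ENNReal.inv_mul_cancel two_ne_zero ofNat_ne_top, one_mul]
  · rwa [← exp_neg, neg_neg, ← exp_one_pow] at hupper
end
end
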